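/- arXiv:2307.10328 — 5 statements merged into one kernel-verified Lean document; each statement's English description precedes it below -/
import Mathlib

section
/- Let $X$ be a set, $V : X \to \mathbb{R}$ a function, and for $f \in X$ let $I_V(f) = \{h \in X : V(h) \le V(f)\}$. Let $\theta, \eta : X \to \mathbb{R}_{\ge 0}$ be finitely supported with $\sum_f \theta(f) \le 1$ and $\sum_f \eta(f) \le 1$. If the payoff functions coincide, i.e. $\sum_{f} \theta(f) \mathbf{1}_{I_V(f)} = \sum_{f} \eta(f) \mathbf{1}_{I_V(f)}$ as functions on $X$, then the values coincide: $\sum_f \theta(f) V(f) = \sum_f \eta(f) V(f)$. -/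
/-- If two gambles (finitely supported nonnegative functions of mass at most 1)
have the same payoff function `∑ f, θ f • 1_{I_V(f)}` where `I_V(f) = {h | V h ≤ V f}`,
then they have the same value `∑ f, θ f * V f`. -/
theorem value_eq_of_payoff_eq {X : Type*} (V : X → ℝ) (θ η : X →₀ ℝ)
    (hθ0 : ∀ f, 0 ≤ θ f) (hη0 : ∀ f, 0 ≤ η f)
    (hθ1 : θ.sum (fun _ v => v) ≤ 1) (hη1 : η.sum (fun _ v => v) ≤ 1)
    (hpay : ∀ h : X,
      θ.sum (fun f v => v * (if V h ≤ V f then (1 : ℝ) else 0)) =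
      η.sum (fun f v => v * (if V h ≤ V f then (1 : ℝ) else 0))) :
    θ.sum (fun f v => v * V f) = η.sum (fun f v => v * V f) := by
  classical
  set A : Finset X := θ.support ∪ η.support with hA
  -- rewrite a Finsupp.sum as a sum over A
  have hsumA : ∀ (μ : X →₀ ℝ) (g : X → ℝ → ℝ), (∀ f, g f 0 = 0) →
      μ.support ⊆ A → μ.sum g = ∑ f ∈ A, g f (μ f) := by
    intro μ g hg hsub
    rw [Finsupp.sum]
    refine Finset.sum_subset hsub ?_
    intro x _ hx
    rw [Finsupp.notMem_support_iff.mp hx, hg]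
  have hθsub : θ.support ⊆ A := Finset.subset_union_left
  have hηsub : η.support ⊆ A := Finset.subset_union_right
  -- payoff rewritten as tail sums over A
  have hpay' : ∀ h : X,
      ∑ f ∈ A.filter (fun f => V h ≤ V f), θ f
        = ∑ f ∈ A.filter (fun f => V h ≤ V f), η f := by
    intro h
    have := hpay h
    rw [hsumA θ _ (fun f => by simp) hθsub, hsumA η _ (fun f => by simp) hηsub] at this
    simpa [Finset.sum_filter, mul_ite] using this
  -- tail sums at arbitrary thresholds (weak inequality)
  have key : ∀ t : ℝ, ∑ f ∈ A.filter (fun f => t ≤ V f), θ f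
      = ∑ f ∈ A.filter (fun f => t ≤ V f), η f := by
    intro t
    by_cases hne : (A.filter (fun f => t ≤ V f)).Nonempty
    · obtain ⟨h, hh, hmin⟩ := Finset.exists_min_image _ V hne
      have hht : t ≤ V h := (Finset.mem_filter.mp hh).2
      have heq : A.filter (fun f => t ≤ V f) = A.filter (fun f => V h ≤ V f) := by
        apply Finset.filter_congr
        intro f hf
        constructor
        · intro hle
          exact hmin f (Finset.mem_filter.mpr ⟨hf, hle⟩)
        · intro hle; exact le_trans hht hle
      rw [heq]; exact hpay' h
    · rw [Finset.not_nonempty_iff_eq_empty.mp hne]; simp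
  -- tail sums with strict inequality
  have key' : ∀ t : ℝ, ∑ f ∈ A.filter (fun f => t < V f), θ f
      = ∑ f ∈ A.filter (fun f => t < V f), η f := by
    intro t
    by_cases hne : (A.filter (fun f => t < V f)).Nonempty
    · obtain ⟨h, hh, hmin⟩ := Finset.exists_min_image _ V hne
      have hht : t < V h := (Finset.mem_filter.mp hh).2
      have heq : A.filter (fun f => t < V f) = A.filter (fun f => V h ≤ V f) := by
        apply Finset.filter_congr
        intro f hf
        constructor
        · intro hle
          exact hmin f (Finset.mem_filter.mpr ⟨hf, hle⟩)
        · intro hle; exact lt_of_lt_of_le hht hle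
      rw [heq]; exact hpay' h
    · rw [Finset.not_nonempty_iff_eq_empty.mp hne]; simp
  -- split tail sum into fiber + strict tail
  have hsplit : ∀ (μ : X →₀ ℝ) (t : ℝ),
      ∑ f ∈ A.filter (fun f => t ≤ V f), μ f
        = (∑ f ∈ A.filter (fun f => V f = t), μ f)
          + ∑ f ∈ A.filter (fun f => t < V f), μ f := by
    intro μ t
    rw [← Finset.sum_filter_add_sum_filter_not (A.filter (fun f => t ≤ V f))
      (fun f => V f = t), Finset.filter_filter, Finset.filter_filter]
    congr 1
    · refine Finset.sum_congr (Finset.filter_congr fun f _ => ?_) fun _ _ => rfl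
      constructor
      · rintro ⟨_, h⟩; exact h
      · intro h; exact ⟨le_of_eq h.symm, h⟩
    · refine Finset.sum_congr (Finset.filter_congr fun f _ => ?_) fun _ _ => rfl
      constructor
      · rintro ⟨h1, h2⟩; exact lt_of_le_of_ne h1 (fun e => h2 e.symm)
      · intro h; exact ⟨le_of_lt h, ne_of_gt h⟩
  -- fiber masses are equal
  have hfib : ∀ t : ℝ, ∑ f ∈ A.filter (fun f => V f = t), θ f
      = ∑ f ∈ A.filter (fun f => V f = t), η f := by
    intro t
    have h1 := hsplit θ t
    have h2 := hsplit η t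
    have := key t
    rw [h1, h2, key' t] at this
    linarith
  -- conclude
  rw [hsumA θ _ (fun f => by simp) hθsub, hsumA η _ (fun f => by simp) hηsub]
  have hval : ∀ (μ : X →₀ ℝ),
      ∑ f ∈ A, μ f * V f
        = ∑ v ∈ A.image V, v * ∑ f ∈ A.filter (fun f => V f = v), μ f := by
    intro μ
    rw [← Finset.sum_fiberwise_of_maps_to (fun f hf => Finset.mem_image_of_mem V hf)
      (fun f => μ f * V f)]
    refine Finset.sum_congr rfl fun v _ => ?_
    rw [Finset.mul_sum]
    refine Finset.sum_congr rfl fun f hf => ?_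
    rw [(Finset.mem_filter.mp hf).2, mul_comm]
  rw [hval θ, hval η]
  exact Finset.sum_congr rfl fun v _ => by rw [hfib v]
end

section
/- Let $V : \mathcal{F} \to \mathbb{R}$ and $u : X \to \mathbb{R}$ be coherent, i.e., for all gambles $\theta, \eta$ (finitely supported nonnegative functions on $\mathcal{F}$ of mass $\le 1$), if $\sum_f \theta(f) u(f(\omega)) \ge \sum_f \eta(f) u(f(\omega))$ for all $\omega \in \Omega$, then $\sum_f \theta(f) V(f) \ge \sum_f \eta(f) V(f)$. Suppose $\mathcal{F}$ contains constant acts $x, y$ with $V(y) > V(x)$. Then there exists $t > 0$ such that $u(y) - u(x) = t (V(y) - V(x))$; in particular, for constant acts, coherence forces $u$ restricted to $\{x,y\}$ to be a positive affine transform of $V$. -/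
/-- If `V` and `u` are coherent (state-by-state dominance of conditional
gamble utilities implies dominance of values) and `F` contains constant acts with values
`x, y` with `V ȳ > V x̄`, then there is `t > 0` with `u y - u x = t * (V ȳ - V x̄)`. -/
theorem coherent_const_affine {Ω X : Type*} (F : Set (Ω → X))
    (V : (Ω → X) → ℝ) (u : X → ℝ) (x y : X)
    (hxF : (fun _ : Ω => x) ∈ F) (hyF : (fun _ : Ω => y) ∈ F)
    (hVxy : V (fun _ : Ω => x) < V (fun _ : Ω => y))
    (coh : ∀ θ η : (Ω → X) →₀ ℝ, ↑θ.support ⊆ F → ↑η.support ⊆ F →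
      (∀ f, 0 ≤ θ f) → (∀ f, 0 ≤ η f) →
      θ.sum (fun _ v => v) ≤ 1 → η.sum (fun _ v => v) ≤ 1 →
      (∀ ω : Ω, η.sum (fun f v => v * u (f ω)) ≤ θ.sum (fun f v => v * u (f ω))) →
      η.sum (fun f v => v * V f) ≤ θ.sum (fun f v => v * V f)) :
    ∃ t > (0 : ℝ), u y - u x = t * (V (fun _ : Ω => y) - V (fun _ : Ω => x)) := by
  have huxy : u x < u y := by
    by_contra h
    push_neg at h
    have := coh (Finsupp.single (fun _ : Ω => x) 1) (Finsupp.single (fun _ : Ω => y) 1)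
      (by
        intro f hf
        simp only [Finset.mem_coe, Finsupp.mem_support_iff, Finsupp.single_apply] at hf
        by_cases hfx : (fun _ : Ω => x) = f
        · exact hfx ▸ hxF
        · simp [hfx] at hf)
      (by
        intro f hf
        simp only [Finset.mem_coe, Finsupp.mem_support_iff, Finsupp.single_apply] at hf
        by_cases hfy : (fun _ : Ω => y) = f
        · exact hfy ▸ hyF
        · simp [hfy] at hf)
      (fun f => by
        rcases eq_or_ne (fun _ : Ω => x) f with hh | hh <;> simp [Finsupp.single_apply, hh])
      (fun f => by
        rcases eq_or_ne (fun _ : Ω => y) f with hh | hh <;> simp [Finsupp.single_apply, hh])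
      (by rw [Finsupp.sum_single_index]; rfl)
      (by rw [Finsupp.sum_single_index]; rfl)
      (fun ω => by
        rw [Finsupp.sum_single_index (by simp), Finsupp.sum_single_index (by simp)]
        simpa using h)
    rw [Finsupp.sum_single_index (by simp), Finsupp.sum_single_index (by simp)] at this
    simp at this
    linarith
  refine ⟨(u y - u x) / (V (fun _ : Ω => y) - V (fun _ : Ω => x)), ?_, ?_⟩
  · apply div_pos <;> linarith
  · rw [div_mul_cancel₀]
    linarith
end

section
/- Let $\Lambda$ be a nonempty set of finitely additive probabilities on an algebra $\mathcal{A}$, and suppose $V(f) = \inf_{\lambda \in \Lambda} \int u(f)\, d\lambda$ for every act $f \in \mathcal{F}$ (with each $u \circ f$ bounded and measurable). Then for every gamble $\theta$ of the form $\theta = a\delta_f + b\delta_y$ with $a, b \ge 0$, $a + b \le 1$, $f \in \mathcal{F}$, and $y$ a constant act, one has $\sum_g \theta(g) V(g) = \inf_{\lambda \in \Lambda} \int \big(\sum_g \theta(g) u(g(\omega))\big) d\lambda(\omega)$; moreover, if $\theta \ge_u \eta$ (state-by-state dominance of conditional utilities) and $\theta$ has this two-point form, then $\sum_g \theta(g)V(g)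 \ge \sum_g \eta(g)V(g)$. -/
/-!
For a finitely additive probability `λ`, `faInt λ` is the Lebesgue integral of the layer function
`t ↦ λ{t < h} - 1_{t < 0}`, which makes it monotone, translation-equivariant and positively
homogeneous. This gives the first claim: on `a·u(f) + b·u(y)` it equals `a·∫u(f) dλ + b·u(y)`,
and infima commute with such affine maps.

The second claim needs superadditivity, `∑ η_g ∫u(g) dλ ≤ ∫(a·u(f) + b·u(y)) dλ`. Sums of
`𝒜`-measurable functions need not be `𝒜`-measurable (an algebra is only closed under finite
unions), so this cannot be obtained two functions at a time. Instead all the `u ∘ g` are rounded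
up to the grid `δℤ` simultaneously, at a cost of at most `δ` each: the resulting step functions
live on the common finite partition of `Ω` into the fibres of `ω ↦ (⌊u(g ω)/δ⌋)_g`, which are in
`𝒜`, and on such step functions `faInt λ` is linear by finite additivity. Letting `δ → 0` and
bounding `V g` by `∫u(g) dλ` for each `λ ∈ Λ` gives the claim.
-/

open MeasureTheory

/-- An algebra of subsets of `Ω`. -/
structure SetAlgebra (Ω : Type*) where
  sets : Set (Set Ω)
  empty_mem : ∅ ∈ sets
  compl_mem : ∀ A ∈ sets, Aᶜ ∈ sets
  union_mem : ∀ A ∈ sets, ∀ B ∈ sets, A ∪ B ∈ sets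

/-- A finitely additive probability on an algebra of sets. -/
structure FinAddProb {Ω : Type*} (𝒜 : SetAlgebra Ω) where
  toFun : Set Ω → ℝ
  nonneg : ∀ A, 0 ≤ toFun A
  empty : toFun ∅ = 0
  univ : toFun Set.univ = 1
  mono : ∀ A ∈ 𝒜.sets, ∀ B ∈ 𝒜.sets, A ⊆ B → toFun A ≤ toFun B
  additive : ∀ A ∈ 𝒜.sets, ∀ B ∈ 𝒜.sets, Disjoint A B → toFun (A ∪ B) = toFun A + toFun B

/-- The (Choquet-type) integral of a function `h` with respect to a monotone set
function `m` with `m Ω = 1`: for finitely additive probabilities and bounded measurable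
`h` this is the Dunford–Schwartz integral `∫ h dm`. -/
noncomputable def faInt {Ω : Type*} (m : Set Ω → ℝ) (h : Ω → ℝ) : ℝ :=
  (∫ t in Set.Ioi (0 : ℝ), m {ω | t < h ω}) +
    ∫ t in Set.Iio (0 : ℝ), (m {ω | t < h ω} - 1)

/-- `h` is measurable with respect to the algebra `𝒜`. -/
def AMeasurable {Ω : Type*} (𝒜 : SetAlgebra Ω) (h : Ω → ℝ) : Prop :=
  ∀ t : ℝ, {ω | t < h ω} ∈ 𝒜.sets ∧ {ω | h ω < t} ∈ 𝒜.sets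

/-- `h` is bounded. -/
def IsBdd {Ω : Type*} (h : Ω → ℝ) : Prop := ∃ c : ℝ, ∀ ω, |h ω| ≤ c

open Set

namespace SetAlgebra

variable {Ω : Type*} (𝒜 : SetAlgebra Ω)

theorem isSetAlgebra : IsSetAlgebra 𝒜.sets :=
  ⟨𝒜.empty_mem, fun s hs => 𝒜.compl_mem s hs, fun s t hs ht => 𝒜.union_mem s hs t ht⟩

theorem preimage_finset_mem {α : Type*} {Φ : Ω → α} (hfib : ∀ p, Φ ⁻¹' {p} ∈ 𝒜.sets)
    (S : Finset α) : Φ ⁻¹' S ∈ 𝒜.sets := by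
  rw [← biUnion_preimage_singleton]
  exact 𝒜.isSetAlgebra.biUnion_mem S fun p _ => hfib p

end SetAlgebra

namespace FinAddProb

variable {Ω : Type*} {𝒜 : SetAlgebra Ω} (l : FinAddProb 𝒜)

theorem le_one {A : Set Ω} (hA : A ∈ 𝒜.sets) : l.toFun A ≤ 1 :=
  l.univ ▸ l.mono A hA Set.univ 𝒜.isSetAlgebra.univ_mem (subset_univ A)

protected theorem nonempty (l : FinAddProb 𝒜) : Nonempty Ω := by
  by_contra hΩ
  have h := l.univ
  rw [univ_eq_empty_iff.2 (not_nonempty_iff.1 hΩ), l.empty] at h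
  exact zero_ne_one h

theorem toFun_preimage_finset {α : Type*} {Φ : Ω → α} (hfib : ∀ p, Φ ⁻¹' {p} ∈ 𝒜.sets)
    (S : Finset α) : l.toFun (Φ ⁻¹' S) = ∑ p ∈ S, l.toFun (Φ ⁻¹' {p}) := by
  classical
  induction S using Finset.induction_on with
  | empty => simpa using l.empty
  | insert p S hp ih =>
    rw [Finset.coe_insert, insert_eq, preimage_union,
      l.additive _ (hfib p) _ (𝒜.preimage_finset_mem hfib S)
        ((disjoint_singleton_left.2 hp).preimage Φ), ih, Finset.sum_insert hp]

end FinAddProb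

section Regularity

variable {Ω : Type*} {𝒜 : SetAlgebra Ω} {h : Ω → ℝ}

theorem AMeasurable.const (𝒜 : SetAlgebra Ω) (k : ℝ) : AMeasurable 𝒜 (fun _ : Ω => k) := by
  have hmem : ∀ P : Prop, {_ω : Ω | P} ∈ 𝒜.sets := fun P => by
    by_cases hP : P <;> simp [hP, 𝒜.empty_mem, 𝒜.isSetAlgebra.univ_mem]
  exact fun t => ⟨hmem _, hmem _⟩

theorem AMeasurable.add_const (hm : AMeasurable 𝒜 h) (c : ℝ) :
    AMeasurable 𝒜 (fun ω => h ω + c) := fun t => by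
  simpa only [← sub_lt_iff_lt_add, ← lt_sub_iff_add_lt] using hm (t - c)

theorem AMeasurable.const_mul (hm : AMeasurable 𝒜 h) {a : ℝ} (ha : 0 < a) :
    AMeasurable 𝒜 (fun ω => a * h ω) := fun t => by
  simpa only [← div_lt_iff₀' ha, ← lt_div_iff₀' ha] using hm (t / a)

theorem AMeasurable.const_mul_add_const (hm : AMeasurable 𝒜 h) {a : ℝ} (ha : 0 ≤ a) (c : ℝ) :
    AMeasurable 𝒜 (fun ω => a * h ω + c) := by
  rcases ha.eq_or_lt with rfl | ha
  · simpa only [zero_mul, zero_add] using AMeasurable.const 𝒜 c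
  · exact (hm.const_mul ha).add_const c

theorem IsBdd.add_const (hbd : IsBdd h) (c : ℝ) : IsBdd (fun ω => h ω + c) := by
  obtain ⟨B, hB⟩ := hbd
  exact ⟨B + |c|, fun ω => (abs_add_le _ _).trans (add_le_add (hB ω) le_rfl)⟩

theorem IsBdd.const_mul (hbd : IsBdd h) (a : ℝ) : IsBdd (fun ω => a * h ω) := by
  obtain ⟨B, hB⟩ := hbd
  exact ⟨|a| * B, fun ω =>
    (abs_mul a (h ω)).trans_le (mul_le_mul_of_nonneg_left (hB ω) (abs_nonneg a))⟩

end Regularity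

section Layer

variable {Ω : Type*}

noncomputable def layer (m : Set Ω → ℝ) (h : Ω → ℝ) (t : ℝ) : ℝ :=
  m {ω | t < h ω} - (Iio 0).indicator 1 t

noncomputable def constLayer (v : ℝ) : ℝ → ℝ :=
  (Iio v).indicator 1 - (Iio 0).indicator 1

theorem constLayer_eq (v : ℝ) :
    constLayer v = (Ico 0 v).indicator 1 - (Ico v 0).indicator 1 := by
  funext t
  simp only [constLayer, Pi.sub_apply, indicator_apply, mem_Iio, mem_Ico, Pi.one_apply]
  split_ifs <;> grind

theorem integrable_indicator_Ico_one (a b : ℝ) : Integrable ((Ico a b).indicator (1 : ℝ → ℝ)) :=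
  (integrable_indicator_iff measurableSet_Ico).2 (integrableOn_const measure_Ico_lt_top.ne)

theorem integrable_constLayer (v : ℝ) : Integrable (constLayer v) := by
  rw [constLayer_eq]
  exact (integrable_indicator_Ico_one 0 v).sub (integrable_indicator_Ico_one v 0)

theorem integral_constLayer (v : ℝ) : ∫ t, constLayer v t = v := by
  rw [constLayer_eq]
  simp only [Pi.sub_apply]
  rw [integral_sub (integrable_indicator_Ico_one 0 v) (integrable_indicator_Ico_one v 0),
    integral_indicator_one measurableSet_Ico, integral_indicator_one measurableSet_Ico, Real.volume_real_Ico, Real.volume_real_Ico]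
  rcases le_total 0 v with hv | hv <;> simp [hv]

variable {𝒜 : SetAlgebra Ω} (l : FinAddProb 𝒜) {h : Ω → ℝ}

theorem layer_const (k : ℝ) : layer l.toFun (fun _ => k) = constLayer k := by
  funext t
  by_cases ht : t < k <;> simp [layer, constLayer, ht, l.univ, l.empty]

theorem measurable_layer (hm : AMeasurable 𝒜 h) : Measurable (layer l.toFun h) := by
  have hanti : Antitone fun t => l.toFun {ω | t < h ω} := fun t t' htt' =>
    l.mono _ (hm t').1 _ (hm t).1 fun ω hω => htt'.trans_lt hω
  exact hanti.measurable.sub (measurable_const.indicator measurableSet_Iio)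

theorem abs_layer_le (hm : AMeasurable 𝒜 h) (t : ℝ) : |layer l.toFun h t| ≤ 1 := by
  have h0 := l.nonneg {ω | t < h ω}
  have h1 := l.le_one (hm t).1
  rw [abs_le]
  by_cases ht : t < 0 <;> simp [layer, ht] <;> constructor <;> linarith

theorem support_layer_subset {c : ℝ} (hc : ∀ ω, |h ω| ≤ c) :
    Function.support (layer l.toFun h) ⊆ Icc (-c) c := by
  obtain ⟨ω₀⟩ := l.nonempty
  have hc0 : 0 ≤ c := (abs_nonneg _).trans (hc ω₀)
  intro t ht
  contrapose! ht
  simp only [mem_Icc, not_and_or, not_le] at ht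
  rcases ht with ht | ht
  · have hlevel : {ω | t < h ω} = univ := eq_univ_of_forall fun ω => by
      show t < h ω
      linarith [neg_abs_le (h ω), hc ω]
    simp [layer, hlevel, l.univ, show t < 0 by linarith]
  · have hlevel : {ω | t < h ω} = ∅ := eq_empty_of_forall_notMem fun ω hω => by
      linarith [le_abs_self (h ω), hc ω, hω.out]
    simp [layer, hlevel, l.empty, show ¬t < 0 by linarith]

theorem integrable_layer (hbd : IsBdd h) (hm : AMeasurable 𝒜 h) : Integrable (layer l.toFun h) := by
  obtain ⟨c, hc⟩ := hbd
  refine (integrableOn_iff_integrable_of_support_subset (support_layer_subset l hc)).1 ?_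
  exact Measure.integrableOn_of_bounded measure_Icc_lt_top.ne
    (measurable_layer l hm).aestronglyMeasurable (ae_of_all _ (abs_layer_le l hm))

theorem faInt_eq_integral_layer (hbd : IsBdd h) (hm : AMeasurable 𝒜 h) :
    faInt l.toFun h = ∫ t, layer l.toFun h t := by
  have hint := integrable_layer l hbd hm
  rw [← intervalIntegral.integral_Iio_add_Ici hint.integrableOn hint.integrableOn,
    integral_Ici_eq_integral_Ioi, faInt, add_comm]
  congr 1
  · refine setIntegral_congr_fun measurableSet_Iio fun t ht => ?_
    simp [layer, indicator_of_mem ht]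
  · refine setIntegral_congr_fun measurableSet_Ioi fun t ht => ?_
    simp [layer, indicator_of_notMem (notMem_Iio.2 (le_of_lt ht.out))]

theorem faInt_mono {g : Ω → ℝ} (hbd : IsBdd h) (hm : AMeasurable 𝒜 h) (gbd : IsBdd g)
    (gm : AMeasurable 𝒜 g) (hle : ∀ ω, h ω ≤ g ω) : faInt l.toFun h ≤ faInt l.toFun g := by
  rw [faInt_eq_integral_layer l hbd hm, faInt_eq_integral_layer l gbd gm]
  refine integral_mono (integrable_layer l hbd hm) (integrable_layer l gbd gm) fun t => ?_
  exact sub_le_sub_right (l.mono _ (hm t).1 _ (gm t).1 fun ω hω => hω.out.trans_le (hle ω)) _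

theorem faInt_const (k : ℝ) : faInt l.toFun (fun _ => k) = k := by
  rw [faInt_eq_integral_layer l ⟨|k|, fun _ => le_rfl⟩ (AMeasurable.const 𝒜 k), layer_const,
    integral_constLayer]

theorem faInt_add_const (hbd : IsBdd h) (hm : AMeasurable 𝒜 h) (c : ℝ) :
    faInt l.toFun (fun ω => h ω + c) = faInt l.toFun h + c := by
  have hshift : ∀ t,
      layer l.toFun (fun ω => h ω + c) t = layer l.toFun h (t - c) + constLayer c t := by
    intro t
    simp only [layer, constLayer, Pi.sub_apply, sub_lt_iff_lt_add, indicator_apply, mem_Iio,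
      Pi.one_apply]
    split_ifs <;> grind
  rw [faInt_eq_integral_layer l (hbd.add_const c) (hm.add_const c),
    faInt_eq_integral_layer l hbd hm, integral_congr_ae (ae_of_all _ hshift),
    integral_add ((integrable_layer l hbd hm).comp_sub_right c) (integrable_constLayer c),
    integral_sub_right_eq_self (layer l.toFun h) c, integral_constLayer]

theorem faInt_const_mul (hbd : IsBdd h) (hm : AMeasurable 𝒜 h) {a : ℝ} (ha : 0 < a) :
    faInt l.toFun (fun ω => a * h ω) = a * faInt l.toFun h := by
  have hscale : ∀ t, layer l.toFun (fun ω => a * h ω) t = layer l.toFun h (t / a) := by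
    intro t
    simp only [layer, div_lt_iff₀' ha, indicator_apply, mem_Iio, mul_zero, Pi.one_apply]
  rw [faInt_eq_integral_layer l (hbd.const_mul a) (hm.const_mul ha),
    faInt_eq_integral_layer l hbd hm, integral_congr_ae (ae_of_all _ hscale),
    Measure.integral_comp_div, abs_of_pos ha, smul_eq_mul]

theorem faInt_const_mul_add_const (hbd : IsBdd h) (hm : AMeasurable 𝒜 h) {a : ℝ} (ha : 0 ≤ a)
    (c : ℝ) : faInt l.toFun (fun ω => a * h ω + c) = a * faInt l.toFun h + c := by
  rcases ha.eq_or_lt with rfl | ha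
  · simpa only [zero_mul, zero_add] using faInt_const l c
  · rw [faInt_add_const l (hbd.const_mul a) (hm.const_mul ha), faInt_const_mul l hbd hm ha]

theorem neg_le_faInt {c : ℝ} (hc : ∀ ω, |h ω| ≤ c) (hm : AMeasurable 𝒜 h) :
    -c ≤ faInt l.toFun h :=
  faInt_const l (-c) ▸ faInt_mono l ⟨|c|, fun _ => (abs_neg c).le⟩ (AMeasurable.const 𝒜 (-c))
    ⟨c, hc⟩ hm fun ω => neg_le_of_abs_le (hc ω)

end Layer

theorem bddBelow_range_faInt {Ω κ : Type*} {𝒜 : SetAlgebra Ω} (l : κ → FinAddProb 𝒜)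
    {h : Ω → ℝ} (hbd : IsBdd h) (hm : AMeasurable 𝒜 h) :
    BddBelow (range fun k => faInt (l k).toFun h) := by
  obtain ⟨c, hc⟩ := hbd
  exact ⟨-c, forall_mem_range.2 fun k => neg_le_faInt (l k) hc hm⟩

section StepFunctions

variable {Ω α : Type*} {𝒜 : SetAlgebra Ω} {Φ : Ω → α}

theorem setOf_comp_eq_preimage_filter (hfin : (range Φ).Finite) (q : α → Prop)
    [DecidablePred q] : {ω | q (Φ ω)} = Φ ⁻¹' ↑(hfin.toFinset.filter q) := by
  ext ω
  simp

theorem isBdd_comp_of_finite_range (hfin : (range Φ).Finite) (v : α → ℝ) :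
    IsBdd (fun ω => v (Φ ω)) := by
  obtain ⟨c, hc⟩ := (hfin.image fun p => |v p|).bddAbove
  exact ⟨c, fun ω => hc ⟨Φ ω, mem_range_self ω, rfl⟩⟩

theorem aMeasurable_comp_of_fibers (hfin : (range Φ).Finite)
    (hfib : ∀ p, Φ ⁻¹' {p} ∈ 𝒜.sets) (v : α → ℝ) : AMeasurable 𝒜 (fun ω => v (Φ ω)) := by
  classical
  intro t
  rw [setOf_comp_eq_preimage_filter hfin (t < v ·), setOf_comp_eq_preimage_filter hfin (v · < t)]
  exact ⟨𝒜.preimage_finset_mem hfib _, 𝒜.preimage_finset_mem hfib _⟩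

variable (l : FinAddProb 𝒜)

theorem layer_comp_eq_sum (hfin : (range Φ).Finite) (hfib : ∀ p, Φ ⁻¹' {p} ∈ 𝒜.sets)
    (v : α → ℝ) (t : ℝ) :
    layer l.toFun (fun ω => v (Φ ω)) t
      = ∑ p ∈ hfin.toFinset, l.toFun (Φ ⁻¹' {p}) * constLayer (v p) t := by
  classical
  have hlevel : l.toFun {ω | t < v (Φ ω)}
      = ∑ p ∈ hfin.toFinset, l.toFun (Φ ⁻¹' {p}) * (Iio (v p)).indicator 1 t := by
    rw [setOf_comp_eq_preimage_filter hfin (t < v ·), l.toFun_preimage_finset hfib,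
      Finset.sum_filter]
    refine Finset.sum_congr rfl fun p _ => ?_
    by_cases hp : t < v p <;> simp [hp]
  have htotal : ∑ p ∈ hfin.toFinset, l.toFun (Φ ⁻¹' {p}) = 1 := by
    rw [← l.toFun_preimage_finset hfib, Finite.coe_toFinset, preimage_range, l.univ]
  simp only [layer, constLayer, Pi.sub_apply, mul_sub, Finset.sum_sub_distrib, ← Finset.sum_mul,
    htotal, hlevel, one_mul]

theorem faInt_comp_eq_sum (hfin : (range Φ).Finite) (hfib : ∀ p, Φ ⁻¹' {p} ∈ 𝒜.sets)
    (v : α → ℝ) :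
    faInt l.toFun (fun ω => v (Φ ω)) = ∑ p ∈ hfin.toFinset, v p * l.toFun (Φ ⁻¹' {p}) := by
  rw [faInt_eq_integral_layer l (isBdd_comp_of_finite_range hfin v)
      (aMeasurable_comp_of_fibers hfin hfib v),
    integral_congr_ae (ae_of_all _ (layer_comp_eq_sum l hfin hfib v)),
    integral_finsetSum _ fun p _ => (integrable_constLayer (v p)).const_mul _]
  refine Finset.sum_congr rfl fun p _ => ?_
  rw [integral_const_mul, integral_constLayer, mul_comm]

theorem faInt_comp_sum_mul {ι : Type*} [Fintype ι] (hfin : (range Φ).Finite)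
    (hfib : ∀ p, Φ ⁻¹' {p} ∈ 𝒜.sets) (c : ι → ℝ) (v : ι → α → ℝ) :
    faInt l.toFun (fun ω => ∑ i, c i * v i (Φ ω))
      = ∑ i, c i * faInt l.toFun (fun ω => v i (Φ ω)) := by
  rw [faInt_comp_eq_sum l hfin hfib fun p => ∑ i, c i * v i p]
  simp only [faInt_comp_eq_sum l hfin hfib (v _), Finset.sum_mul, Finset.mul_sum, mul_assoc]
  exact Finset.sum_comm

end StepFunctions

section Superadditivity

variable {Ω ι : Type*} {𝒜 : SetAlgebra Ω}

noncomputable def floorProfile (δ : ℝ) (h : ι → Ω → ℝ) (ω : Ω) (i : ι) : ℤ := ⌊h i ω / δ⌋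

theorem mul_floor_div_le {δ : ℝ} (hδ : 0 < δ) (x : ℝ) : δ * ⌊x / δ⌋ ≤ x := by
  have h := Int.floor_le (x / δ)
  rw [le_div_iff₀ hδ] at h
  linarith

theorem lt_mul_floor_div_add {δ : ℝ} (hδ : 0 < δ) (x : ℝ) : x < δ * ⌊x / δ⌋ + δ := by
  have h := Int.lt_floor_add_one (x / δ)
  rw [div_lt_iff₀ hδ] at h
  linarith

theorem finite_range_floorProfile [Finite ι] (δ : ℝ) {h : ι → Ω → ℝ} (hbd : ∀ i, IsBdd (h i)) :
    (range (floorProfile δ h)).Finite := by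
  choose B hB using hbd
  refine (Set.Finite.pi fun i => finite_Icc ⌊-(B i / |δ|)⌋ ⌊B i / |δ|⌋).subset ?_
  rintro _ ⟨ω, rfl⟩ i -
  have hb : |h i ω / δ| ≤ B i / |δ| := by
    rw [abs_div]
    exact div_le_div_of_nonneg_right (hB i ω) (abs_nonneg δ)
  exact ⟨Int.floor_mono (abs_le.1 hb).1, Int.floor_mono (abs_le.1 hb).2⟩

theorem floorProfile_fiber_mem [Fintype ι] {δ : ℝ} (hδ : 0 < δ) {h : ι → Ω → ℝ}
    (hm : ∀ i, AMeasurable 𝒜 (h i)) (p : ι → ℤ) : floorProfile δ h ⁻¹' {p} ∈ 𝒜.sets := by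
  have hfib : floorProfile δ h ⁻¹' {p}
      = ⋂ i ∈ Finset.univ, {ω | h i ω < p i * δ}ᶜ ∩ {ω | h i ω < (p i + 1) * δ} := by
    ext ω
    simp [floorProfile, funext_iff, Int.floor_eq_iff, le_div_iff₀ hδ, div_lt_iff₀ hδ]
  rw [hfib]
  exact 𝒜.isSetAlgebra.biInter_mem _ fun i _ =>
    𝒜.isSetAlgebra.inter_mem (𝒜.compl_mem _ (hm i _).2) (hm i _).2

theorem sum_mul_faInt_le_add [Fintype ι] (l : FinAddProb 𝒜) {c : ι → ℝ} (hc : ∀ i, 0 ≤ c i)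
    {h : ι → Ω → ℝ} (hbd : ∀ i, IsBdd (h i)) (hm : ∀ i, AMeasurable 𝒜 (h i)) {H : Ω → ℝ}
    (hHbd : IsBdd H) (hHm : AMeasurable 𝒜 H) (hdom : ∀ ω, ∑ i, c i * h i ω ≤ H ω) {δ : ℝ}
    (hδ : 0 < δ) : ∑ i, c i * faInt l.toFun (h i) ≤ faInt l.toFun H + δ * ∑ i, c i := by
  have hfin := finite_range_floorProfile δ hbd
  have hfib := floorProfile_fiber_mem (𝒜 := 𝒜) hδ hm
  let v : ι → (ι → ℤ) → ℝ := fun i p => δ * p i + δ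
  have hv_ge : ∀ i ω, h i ω ≤ v i (floorProfile δ h ω) := fun i ω =>
    (lt_mul_floor_div_add hδ (h i ω)).le
  have hv_le : ∀ i ω, v i (floorProfile δ h ω) ≤ h i ω + δ := fun i ω => by
    show δ * ⌊h i ω / δ⌋ + δ ≤ h i ω + δ
    linarith [mul_floor_div_le hδ (h i ω)]
  calc ∑ i, c i * faInt l.toFun (h i)
      ≤ ∑ i, c i * faInt l.toFun (fun ω => v i (floorProfile δ h ω)) := by
        gcongr with i
        · exact hc i
        · exact faInt_mono l (hbd i) (hm i) (isBdd_comp_of_finite_range hfin _)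
            (aMeasurable_comp_of_fibers hfin hfib _) (hv_ge i)
    _ = faInt l.toFun (fun ω => ∑ i, c i * v i (floorProfile δ h ω)) :=
        (faInt_comp_sum_mul l hfin hfib c v).symm
    _ ≤ faInt l.toFun (fun ω => H ω + δ * ∑ i, c i) := by
        refine faInt_mono l (isBdd_comp_of_finite_range hfin fun p => ∑ i, c i * v i p)
          (aMeasurable_comp_of_fibers hfin hfib fun p => ∑ i, c i * v i p) (hHbd.add_const _)
          (hHm.add_const _) fun ω => ?_
        calc ∑ i, c i * v i (floorProfile δ h ω) ≤ ∑ i, c i * (h i ω + δ) := by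
              gcongr with i
              exacts [hc i, hv_le i ω]
          _ = ∑ i, c i * h i ω + δ * ∑ i, c i := by
              rw [Finset.mul_sum, ← Finset.sum_add_distrib]
              simp only [mul_add, mul_comm δ]
          _ ≤ H ω + δ * ∑ i, c i := by linarith [hdom ω]
    _ = faInt l.toFun H + δ * ∑ i, c i := faInt_add_const l hHbd hHm _

theorem sum_mul_faInt_le {κ : Type*} (l : FinAddProb 𝒜) (J : Finset κ) {c : κ → ℝ}
    (hc : ∀ i ∈ J, 0 ≤ c i) {h : κ → Ω → ℝ} (hbd : ∀ i ∈ J, IsBdd (h i))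
    (hm : ∀ i ∈ J, AMeasurable 𝒜 (h i)) {H : Ω → ℝ} (hHbd : IsBdd H) (hHm : AMeasurable 𝒜 H)
    (hdom : ∀ ω, ∑ i ∈ J, c i * h i ω ≤ H ω) :
    ∑ i ∈ J, c i * faInt l.toFun (h i) ≤ faInt l.toFun H := by
  set C := ∑ i ∈ J, c i
  have hC : 0 ≤ C := Finset.sum_nonneg hc
  have happrox : ∀ δ > 0, ∑ i ∈ J, c i * faInt l.toFun (h i) ≤ faInt l.toFun H + δ * C :=
    fun δ hδ => by
      have hdom' : ∀ ω, ∑ i : J, c i * h i ω ≤ H ω := fun ω =>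
        (Finset.sum_coe_sort J fun i => c i * h i ω).trans_le (hdom ω)
      have := sum_mul_faInt_le_add (ι := J) l (fun i => hc i i.2) (fun i => hbd i i.2)
        (fun i => hm i i.2) hHbd hHm hdom' hδ
      rwa [Finset.sum_coe_sort J fun i => c i * faInt l.toFun (h i), Finset.sum_coe_sort J c]
        at this
  refine le_of_forall_pos_le_add fun ε hε => (happrox (ε / (C + 1)) (by positivity)).trans ?_
  have hε' : ε / (C + 1) * C ≤ ε := by
    rw [div_mul_eq_mul_div, div_le_iff₀ (by linarith)]
    nlinarith
  linarith

end Superadditivity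

/-- Sufficiency direction of the MEU characterization. If
`V f = ⨅ λ ∈ Λ, ∫ u(f) dλ` on `F` (with `u ∘ f` bounded and measurable), then for every
gamble of the two-point form `θ = a·δ_f + b·δ_ȳ` (with `ȳ` a constant act in `F`) the
value of `θ` equals the lower envelope of the integrals of its conditional utility, and
`θ ≥_u η` implies that the value of `θ` is at least the value of any gamble `η`. -/
theorem meu_implies_theta0_coherence {Ω X : Type*} (𝒜 : SetAlgebra Ω)
    (Λ : Set (FinAddProb 𝒜)) (hΛ : Λ.Nonempty)
    (F : Set (Ω → X)) (V : (Ω → X) → ℝ) (u : X → ℝ) (y : X)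
    (hyF : (fun _ : Ω => y) ∈ F)
    (hbm : ∀ f ∈ F, IsBdd (fun ω => u (f ω)) ∧ AMeasurable 𝒜 (fun ω => u (f ω)))
    (hrep : ∀ f ∈ F, V f = ⨅ l : Λ, faInt (l : FinAddProb 𝒜).toFun (fun ω => u (f ω))) :
    ∀ a b : ℝ, 0 ≤ a → 0 ≤ b → a + b ≤ 1 → ∀ f ∈ F,
      (a * V f + b * V (fun _ : Ω => y) =
        ⨅ l : Λ, faInt (l : FinAddProb 𝒜).toFun (fun ω => a * u (f ω) + b * u y)) ∧
      (∀ η : (Ω → X) →₀ ℝ, ↑η.support ⊆ F → (∀ g, 0 ≤ η g) →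
        η.sum (fun _ v => v) ≤ 1 →
        (∀ ω : Ω, η.sum (fun g v => v * u (g ω)) ≤ a * u (f ω) + b * u y) →
        η.sum (fun g v => v * V g) ≤ a * V f + b * V (fun _ : Ω => y)) := by
  intro a b ha _ _ f hf
  have : Nonempty Λ := hΛ.to_subtype
  obtain ⟨hfbd, hfm⟩ := hbm f hf
  have hV_le : ∀ g ∈ F, ∀ l : Λ, V g ≤ faInt (l : FinAddProb 𝒜).toFun (fun ω => u (g ω)) :=
    fun g hg l => hrep g hg ▸ ciInf_le (bddBelow_range_faInt _ (hbm g hg).1 (hbm g hg).2) l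
  have hVy : V (fun _ => y) = u y := by
    simp only [hrep _ hyF, faInt_const, ciInf_const]
  have hθ : a * V f + b * V (fun _ : Ω => y)
      = ⨅ l : Λ, faInt (l : FinAddProb 𝒜).toFun (fun ω => a * u (f ω) + b * u y) := by
    simp only [faInt_const_mul_add_const _ hfbd hfm ha, hVy, hrep f hf, Real.mul_iInf_of_nonneg ha]
    refine ciInf_add ?_ _
    simpa only [← range_comp, Function.comp_def, id] using
      (monotone_id.const_mul ha).map_bddBelow (bddBelow_range_faInt _ hfbd hfm)
  refine ⟨hθ, fun η hηF hη0 _ hdom => hθ ▸ le_ciInf fun l => ?_⟩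
  calc η.sum (fun g v => v * V g)
      ≤ ∑ g ∈ η.support, η g * faInt (l : FinAddProb 𝒜).toFun (fun ω => u (g ω)) :=
        Finset.sum_le_sum fun g hg => mul_le_mul_of_nonneg_left (hV_le g (hηF hg) l) (hη0 g)
    _ ≤ _ := sum_mul_faInt_le _ _ (fun g _ => hη0 g) (fun g hg => (hbm g (hηF hg)).1)
        (fun g hg => (hbm g (hηF hg)).2) ((hfbd.const_mul a).add_const _)
        (hfm.const_mul_add_const ha _) hdom
end

section
/- Let $\gamma$ be a convex (supermodular) capacity on an algebra $\mathcal{A}$, i.e. $\gamma(\emptyset)=0$, $\gamma(\Omega)=1$, $\gamma$ monotone, and $\gamma(A \cup B) + \gamma(A \cap B) \ge \gamma(A) + \gamma(B)$. Let $V(f) = \int u(f)\, d\gamma$ be the Choquet integral. If $\theta$ is a gamble whose support consists of pairwise comonotonic acts (i.e. $[u(f(\omega)) - u(f(\omega'))][u(g(\omega)) - u(g(\omega'))] \ge 0$ for all $f,g$ in the support and $\omega, \omega' \in \Omega$), and $\eta$ is any gamble with $\sum_f \theta(f) u(f(\omega)) \ge \sum_f \eta(f) u(f(\omega))$ for all $\omega$,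 then $\sum_f \theta(f) V(f) \ge \sum_f \eta(f) V(f)$. -/
/-!
Along any ordering of the cells of a finite partition, the marginal increments of `γ` are the
weights of a charge (`marginalSum`). When `γ` is convex this charge dominates `γ` on every union
of cells, so integrating a step function against it bounds its Choquet integral from above; when
the step function decreases along the ordering, the two agree (layer-cake formula).

Rounding the utilities `u ∘ f` up to the grid `ε ℤ` puts them on the common finite partition
into the fibres of the rounded utility profile. Ordering those cells by the `θ`-weighted utility
makes every act in the support of `θ` decreasing along the ordering, because these acts are
pairwise comonotonic. For the resulting charge `μ`, up to `O(ε)`,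
`∑ η_f V f ≤ ∫ ∑ η_f u ∘ f dμ ≤ ∫ ∑ θ_f u ∘ f dμ = ∑ θ_f V f`.
-/

open MeasureTheory

open Set Function

namespace SetAlgebra

variable {Ω : Type*} (𝒜 : SetAlgebra Ω)

lemma univ_mem : univ ∈ 𝒜.sets := by
  simpa using 𝒜.compl_mem ∅ 𝒜.empty_mem

lemma inter_mem {A B : Set Ω} (hA : A ∈ 𝒜.sets) (hB : B ∈ 𝒜.sets) : A ∩ B ∈ 𝒜.sets := by
  simpa [compl_union] using
    𝒜.compl_mem _ (𝒜.union_mem _ (𝒜.compl_mem _ hA) _ (𝒜.compl_mem _ hB))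

lemma iInter_mem {κ : Type*} [Finite κ] {A : κ → Set Ω} (h : ∀ k, A k ∈ 𝒜.sets) :
    (⋂ k, A k) ∈ 𝒜.sets := by
  induction κ using Finite.induction_empty_option with
  | of_equiv e ih =>
    rw [← e.surjective.iInter_comp]
    exact ih fun k => h (e k)
  | h_empty => simpa using 𝒜.univ_mem
  | h_option ih =>
    rw [iInter_option]
    exact 𝒜.inter_mem (h none) (ih fun k => h (some k))

end SetAlgebra

structure IsCapacity {Ω : Type*} (𝒜 : SetAlgebra Ω) (γ : Set Ω → ℝ) : Prop where
  empty : γ ∅ = 0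
  univ : γ univ = 1
  mono : MonotoneOn γ 𝒜.sets

namespace IsCapacity

variable {Ω : Type*} {𝒜 : SetAlgebra Ω} {γ : Set Ω → ℝ}

lemma nonneg (hγ : IsCapacity 𝒜 γ) {A : Set Ω} (hA : A ∈ 𝒜.sets) : 0 ≤ γ A :=
  hγ.empty ▸ hγ.mono 𝒜.empty_mem hA (empty_subset A)

lemma le_one (hγ : IsCapacity 𝒜 γ) {A : Set Ω} (hA : A ∈ 𝒜.sets) : γ A ≤ 1 :=
  hγ.univ ▸ hγ.mono hA 𝒜.univ_mem (subset_univ A)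

end IsCapacity

def SupermodularOn {Ω : Type*} (γ : Set Ω → ℝ) (S : Set (Set Ω)) : Prop :=
  ∀ B ∈ S, ∀ C ∈ S, γ B + γ C ≤ γ (B ∪ C) + γ (B ∩ C)

noncomputable def layerCake (g : ℝ → ℝ) : ℝ :=
  (∫ t in Ioi 0, g t) + ∫ t in Iio 0, (g t - 1)

lemma faInt_eq_layerCake {Ω : Type*} (m : Set Ω → ℝ) (h : Ω → ℝ) :
    faInt m h = layerCake fun t => m {ω | t < h ω} := rfl

def LayerIntegrable (g : ℝ → ℝ) : Prop :=
  IntegrableOn g (Ioi 0) ∧ IntegrableOn (fun t => g t - 1) (Iio 0)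

lemma layerCake_mono {g g' : ℝ → ℝ} (hg : LayerIntegrable g) (hg' : LayerIntegrable g')
    (h : g ≤ g') : layerCake g ≤ layerCake g' :=
  add_le_add (setIntegral_mono hg.1 hg'.1 h)
    (setIntegral_mono hg.2 hg'.2 fun t => sub_le_sub_right (h t) 1)

lemma integrableOn_of_bounded_of_eqOn_zero {f : ℝ → ℝ} {s K : Set ℝ} {M : ℝ}
    (hs : MeasurableSet s) (hK : MeasurableSet K) (hsK : volume (s ∩ K) ≠ ⊤) (hf : Measurable f)
    (hM : ∀ t, |f t| ≤ M) (h0 : EqOn f 0 (s \ K)) : IntegrableOn f s := by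
  rw [← inter_union_sdiff s K]
  exact (Measure.integrableOn_of_bounded hsK hf.aestronglyMeasurable (.of_forall hM)).union
    (integrableOn_zero.congr_fun h0.symm (hs.diff hK))

lemma layerIntegrable_of_bounded {g : ℝ → ℝ} {c M : ℝ} (hg : Measurable g)
    (hM : ∀ t, |g t| ≤ M) (h0 : ∀ t, c < t → g t = 0) (h1 : ∀ t, t < -c → g t = 1) :
    LayerIntegrable g := by
  refine ⟨integrableOn_of_bounded_of_eqOn_zero measurableSet_Ioi (measurableSet_Iic (a := c)) ?_
      hg hM fun t ht => h0 t (not_le.1 ht.2),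
    integrableOn_of_bounded_of_eqOn_zero measurableSet_Iio (measurableSet_Ici (a := -c)) ?_
      (hg.sub measurable_const) (M := M + 1) (fun t => ?_) fun t ht => ?_⟩
  · simp [Ioi_inter_Iic]
  · simp [Iio_inter_Ici]
  · exact (abs_sub _ _).trans (by simpa using hM t)
  · simp [h1 t (not_le.1 ht.2)]

lemma layerIntegrable_step (a : ℝ) : LayerIntegrable fun t => if t < a then 1 else 0 :=
  layerIntegrable_of_bounded (c := |a|) (M := 1)
    (Measurable.ite measurableSet_Iio measurable_const measurable_const)
    (fun t => by split_ifs <;> simp)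
    (fun t ht => if_neg (not_lt.2 ((le_abs_self a).trans ht.le)))
    (fun t ht => if_pos (ht.trans_le (neg_abs_le a)))

lemma layerCake_step (a : ℝ) : layerCake (fun t => if t < a then 1 else 0) = a := by
  have h₁ : ∫ t in Ioi 0, (if t < a then (1 : ℝ) else 0) = max a 0 := by
    have e : (fun t : ℝ => if t < a then (1 : ℝ) else 0) = (Iio a).indicator 1 := by
      ext t; simp [indicator_apply]
    rw [e, integral_indicator_one measurableSet_Iio, measureReal_restrict_apply measurableSet_Iio,
      Iio_inter_Ioi, Real.volume_real_Ioo, sub_zero]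
  have h₂ : ∫ t in Iio 0, ((if t < a then (1 : ℝ) else 0) - 1) = -max (-a) 0 := by
    have e : (fun t : ℝ => (if t < a then (1 : ℝ) else 0) - 1) =
        fun t => -(Ici a).indicator 1 t := by
      ext t; by_cases h : t < a <;> simp [h, not_le.2, le_of_not_gt]
    rw [e, integral_neg, integral_indicator_one measurableSet_Ici,
      measureReal_restrict_apply measurableSet_Ici, Ici_inter_Iio, Real.volume_real_Ico, zero_sub]
  rw [layerCake, h₁, h₂, ← sub_eq_add_neg, max_zero_sub_max_neg_zero_eq_self]

lemma sum_mul_sub_one {ι : Type*} {F : Finset ι} {q : ι → ℝ} (hq : ∑ r ∈ F, q r = 1)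
    (x : ι → ℝ) : ∑ r ∈ F, q r * x r - 1 = ∑ r ∈ F, q r * (x r - 1) := by
  simp [mul_sub, Finset.sum_sub_distrib, hq]

lemma LayerIntegrable.finset_sum {ι : Type*} {F : Finset ι} {q : ι → ℝ} {g : ι → ℝ → ℝ}
    (hq : ∑ r ∈ F, q r = 1) (hg : ∀ r ∈ F, LayerIntegrable (g r)) :
    LayerIntegrable fun t => ∑ r ∈ F, q r * g r t := by
  refine ⟨integrable_finsetSum _ fun r hr => (hg r hr).1.const_mul (q r), ?_⟩
  simp_rw [sum_mul_sub_one hq]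
  exact integrable_finsetSum _ fun r hr => (hg r hr).2.const_mul (q r)

lemma layerCake_finset_sum {ι : Type*} {F : Finset ι} {q : ι → ℝ} {g : ι → ℝ → ℝ}
    (hq : ∑ r ∈ F, q r = 1) (hg : ∀ r ∈ F, LayerIntegrable (g r)) :
    layerCake (fun t => ∑ r ∈ F, q r * g r t) = ∑ r ∈ F, q r * layerCake (g r) := by
  simp_rw [layerCake, sum_mul_sub_one hq,
    integral_finsetSum _ fun r hr => (hg r hr).1.const_mul (q r),
    integral_finsetSum _ fun r hr => (hg r hr).2.const_mul (q r), integral_const_mul, mul_add,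
    Finset.sum_add_distrib]

section Capacity

variable {Ω : Type*} {𝒜 : SetAlgebra Ω} {γ : Set Ω → ℝ}

lemma IsCapacity.antitone_setOf_lt (hγ : IsCapacity 𝒜 γ) {h : Ω → ℝ} (hm : AMeasurable 𝒜 h) :
    Antitone fun t => γ {ω | t < h ω} := fun _ _ hst =>
  hγ.mono (hm _).1 (hm _).1 fun _ hω => hst.trans_lt hω

lemma IsCapacity.layerIntegrable_setOf_lt (hγ : IsCapacity 𝒜 γ) {h : Ω → ℝ} (hb : IsBdd h)
    (hm : AMeasurable 𝒜 h) : LayerIntegrable fun t => γ {ω | t < h ω} := by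
  obtain ⟨c, hc⟩ := hb
  refine layerIntegrable_of_bounded (c := c) (M := 1) (hγ.antitone_setOf_lt hm).measurable
    (fun t => abs_le.2 ⟨by linarith [hγ.nonneg (hm t).1], hγ.le_one (hm t).1⟩)
    (fun t ht => ?_) (fun t ht => ?_)
  · have hempty : {ω | t < h ω} = ∅ :=
      eq_empty_of_forall_notMem fun ω hω => ((le_abs_self _).trans (hc ω)).not_gt (ht.trans hω)
    rw [hempty, hγ.empty]
  · have huniv : {ω | t < h ω} = Set.univ :=
      eq_univ_of_forall fun ω => ht.trans_le ((neg_le_neg (hc ω)).trans (neg_abs_le _))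
    rw [huniv, hγ.univ]

lemma IsCapacity.faInt_mono (hγ : IsCapacity 𝒜 γ) {h k : Ω → ℝ} (hh : IsBdd h) (hk : IsBdd k)
    (hmh : AMeasurable 𝒜 h) (hmk : AMeasurable 𝒜 k) (hle : h ≤ k) : faInt γ h ≤ faInt γ k :=
  layerCake_mono (hγ.layerIntegrable_setOf_lt hh hmh) (hγ.layerIntegrable_setOf_lt hk hmk)
    fun t => hγ.mono (hmh t).1 (hmk t).1 fun ω hω => hω.trans_le (hle ω)

end Capacity

section MarginalSum

variable {Ω ι : Type*} (γ : Set Ω → ℝ) (A : ι → Set Ω)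

def cellUnion (l : List ι) : Set Ω := ⋃ r ∈ l, A r

@[simp] lemma cellUnion_nil : cellUnion A [] = ∅ := by simp [cellUnion]

@[simp] lemma cellUnion_cons (r : ι) (l : List ι) :
    cellUnion A (r :: l) = A r ∪ cellUnion A l := by simp [cellUnion]

lemma cellUnion_mem {𝒜 : SetAlgebra Ω} {l : List ι} (h : ∀ r ∈ l, A r ∈ 𝒜.sets) :
    cellUnion A l ∈ 𝒜.sets := by
  induction l with
  | nil => simpa using 𝒜.empty_mem
  | cons r l ih =>
    rw [cellUnion_cons]
    exact 𝒜.union_mem _ (h r List.mem_cons_self) _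
      (ih fun r' hr' => h r' (List.mem_cons_of_mem _ hr'))

noncomputable def marginalSum : Set Ω → List ι → (ι → ℝ) →ₗ[ℝ] ℝ
  | _, [] => 0
  | P, r :: l => (γ (P ∪ A r) - γ P) • LinearMap.proj r + marginalSum (P ∪ A r) l

@[simp] lemma marginalSum_nil (P : Set Ω) (w : ι → ℝ) : marginalSum γ A P [] w = 0 := rfl

@[simp] lemma marginalSum_cons (P : Set Ω) (r : ι) (l : List ι) (w : ι → ℝ) :
    marginalSum γ A P (r :: l) w =
      (γ (P ∪ A r) - γ P) * w r + marginalSum γ A (P ∪ A r) l w := rfl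

variable {γ A}

lemma marginalSum_congr {P : Set Ω} {l : List ι} {w w' : ι → ℝ} (h : ∀ r ∈ l, w r = w' r) :
    marginalSum γ A P l w = marginalSum γ A P l w' := by
  induction l generalizing P with
  | nil => rfl
  | cons r l ih =>
    simp only [marginalSum_cons, h r List.mem_cons_self,
      ih fun r' hr' => h r' (List.mem_cons_of_mem _ hr')]

lemma marginalSum_eq_sum [DecidableEq ι] (P : Set Ω) (l : List ι) (w : ι → ℝ) :
    marginalSum γ A P l w = ∑ r ∈ l.toFinset, marginalSum γ A P l (Pi.single r 1) * w r := by
  calc marginalSum γ A P l w = marginalSum γ A P l (∑ r ∈ l.toFinset, w r • Pi.single r 1) :=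
        marginalSum_congr fun r hr => by simp [Finset.sum_apply, Pi.single_apply, hr]
    _ = _ := by simp [map_sum, mul_comm]

lemma marginalSum_mono {𝒜 : SetAlgebra Ω} (hmono : MonotoneOn γ 𝒜.sets) {P : Set Ω}
    {l : List ι} (hP : P ∈ 𝒜.sets) (hA : ∀ r ∈ l, A r ∈ 𝒜.sets) {w w' : ι → ℝ}
    (h : ∀ r ∈ l, w r ≤ w' r) : marginalSum γ A P l w ≤ marginalSum γ A P l w' := by
  induction l generalizing P with
  | nil => rfl
  | cons r l ih =>
    have hPr : P ∪ A r ∈ 𝒜.sets := 𝒜.union_mem _ hP _ (hA r List.mem_cons_self)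
    simp only [marginalSum_cons]
    gcongr ?_ + ?_
    · exact mul_le_mul_of_nonneg_left (h r List.mem_cons_self)
        (sub_nonneg.2 (hmono hP hPr subset_union_left))
    · exact ih hPr (fun r' hr' => hA r' (List.mem_cons_of_mem _ hr'))
        fun r' hr' => h r' (List.mem_cons_of_mem _ hr')

lemma marginalSum_indicator_of_pairwise {P : Set Ω} {l : List ι} {p : ι → Bool}
    (hp : l.Pairwise fun a b => p b → p a) :
    marginalSum γ A P l (fun r => if p r then 1 else 0) =
      γ (P ∪ cellUnion A (l.filter p)) - γ P := by
  induction l generalizing P with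
  | nil => simp
  | cons r l ih =>
    obtain ⟨hr, hl⟩ := List.pairwise_cons.1 hp
    by_cases hpr : p r
    · simp only [marginalSum_cons, hpr, List.filter_cons_of_pos, cellUnion_cons, ih hl,
        union_assoc, if_true, mul_one]
      ring
    · have hnil : l.filter p = [] :=
        List.filter_eq_nil_iff.2 fun b hb hpb => hpr (hr b hb hpb)
      have := ih (P := P ∪ A r) hl
      simp only [hnil, cellUnion_nil, union_empty] at this
      simp [hpr, hnil, this]

lemma sub_le_marginalSum_indicator {𝒜 : SetAlgebra Ω}
    (hconvex : SupermodularOn γ 𝒜.sets)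
    {P : Set Ω} {l : List ι} (hP : P ∈ 𝒜.sets) (hA : ∀ r ∈ l, A r ∈ 𝒜.sets)
    (hdisj : l.Pairwise (Disjoint on A)) (p : ι → Bool) :
    γ (P ∪ cellUnion A (l.filter p)) - γ P ≤
      marginalSum γ A P l (fun r => if p r then 1 else 0) := by
  induction l generalizing P with
  | nil => simp
  | cons r l ih =>
    obtain ⟨hr, hl⟩ := List.pairwise_cons.1 hdisj
    have hAr := hA r List.mem_cons_self
    have hPr : P ∪ A r ∈ 𝒜.sets := 𝒜.union_mem _ hP _ hAr
    have ih := ih hPr (fun r' hr' => hA r' (List.mem_cons_of_mem _ hr')) hl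
    by_cases hpr : p r
    · simp only [marginalSum_cons, hpr, List.filter_cons_of_pos, cellUnion_cons, ← union_assoc,
        if_true, mul_one]
      linarith
    · have hUr : Disjoint (cellUnion A (l.filter p)) (A r) := by
        simp only [cellUnion, disjoint_iUnion_left]
        exact fun r' hr' => (hr r' (List.mem_of_mem_filter hr')).symm
      have hU : cellUnion A (l.filter p) ∈ 𝒜.sets :=
        cellUnion_mem A fun r' hr' => hA r' (List.mem_cons_of_mem _ (List.mem_of_mem_filter hr'))
      have hsup := hconvex _ (𝒜.union_mem _ hP _ hU) _ hPr
      rw [← union_inter_distrib_left, hUr.inter_eq, union_empty,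
        show P ∪ cellUnion A (l.filter p) ∪ (P ∪ A r) = P ∪ A r ∪ cellUnion A (l.filter p) by
          ext; simp only [mem_union]; tauto] at hsup
      simp only [marginalSum_cons, hpr, Bool.false_eq_true, not_false_eq_true,
        List.filter_cons_of_neg, if_false, mul_zero, zero_add]
      linarith

end MarginalSum

lemma marginalSum_one {Ω ι : Type*} {γ : Set Ω → ℝ} {A : ι → Set Ω} (P : Set Ω) (l : List ι) :
    marginalSum γ A P l 1 = γ (P ∪ cellUnion A l) - γ P := by
  rw [Pi.one_def]
  simpa using marginalSum_indicator_of_pairwise (γ := γ) (A := A) (P := P) (p := fun _ => true)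
    (List.pairwise_of_forall fun _ _ => id)

lemma layerCake_marginalSum {Ω ι : Type*} {γ : Set Ω → ℝ} {A : ι → Set Ω} {l : List ι}
    (hl : marginalSum γ A ∅ l 1 = 1) (v : ι → ℝ) :
    LayerIntegrable (fun t => marginalSum γ A ∅ l fun r => if t < v r then 1 else 0) ∧
      layerCake (fun t => marginalSum γ A ∅ l fun r => if t < v r then 1 else 0) =
        marginalSum γ A ∅ l v := by
  classical
  have hq : ∑ r ∈ l.toFinset, marginalSum γ A ∅ l (Pi.single r 1) = 1 := by
    simpa using (marginalSum_eq_sum ∅ l 1).symm.trans hl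
  have hstep r (_ : r ∈ l.toFinset) := layerIntegrable_step (v r)
  simp_rw [fun t => marginalSum_eq_sum (γ := γ) (A := A) ∅ l fun r => if t < v r then 1 else 0]
  refine ⟨LayerIntegrable.finset_sum hq hstep, ?_⟩
  rw [layerCake_finset_sum hq hstep, marginalSum_eq_sum ∅ l v]
  simp only [layerCake_step]

section SimpleFunction

variable {Ω ι : Type*} {𝒜 : SetAlgebra Ω} {γ : Set Ω → ℝ} {π : Ω → ι} {l : List ι}

lemma setOf_comp_eq_cellUnion (hl : ∀ ω, π ω ∈ l) (p : ι → Bool) :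
    {ω | p (π ω)} = cellUnion (fun r => π ⁻¹' {r}) (l.filter p) := by
  ext ω
  simp [cellUnion, hl ω]

lemma cellUnion_preimage_singleton (hl : ∀ ω, π ω ∈ l) :
    cellUnion (fun r => π ⁻¹' {r}) l = univ := by
  simpa using (setOf_comp_eq_cellUnion hl fun _ => true).symm

lemma aMeasurable_comp (hπ : ∀ r, π ⁻¹' {r} ∈ 𝒜.sets) (hl : ∀ ω, π ω ∈ l) (v : ι → ℝ) :
    AMeasurable 𝒜 fun ω => v (π ω) := by
  intro t
  have hlt := setOf_comp_eq_cellUnion hl fun r => decide (t < v r)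
  have hgt := setOf_comp_eq_cellUnion hl fun r => decide (v r < t)
  simp only [decide_eq_true_eq] at hlt hgt
  rw [hlt, hgt]
  exact ⟨cellUnion_mem _ fun r _ => hπ r, cellUnion_mem _ fun r _ => hπ r⟩

lemma isBdd_comp (hl : ∀ ω, π ω ∈ l) (v : ι → ℝ) : IsBdd fun ω => v (π ω) := by
  classical
  exact ⟨∑ r ∈ l.toFinset, |v r|, fun ω =>
    Finset.single_le_sum (fun r _ => abs_nonneg (v r)) (List.mem_toFinset.2 (hl ω))⟩

lemma capacity_setOf_lt_eq_marginalSum (hγ0 : γ ∅ = 0) (hl : ∀ ω, π ω ∈ l) {v : ι → ℝ}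
    (hsort : l.Pairwise fun r r' => v r' ≤ v r) (t : ℝ) :
    γ {ω | t < v (π ω)} =
      marginalSum γ (fun r => π ⁻¹' {r}) ∅ l fun r => if t < v r then 1 else 0 := by
  have h := marginalSum_indicator_of_pairwise (γ := γ) (A := fun r => π ⁻¹' {r}) (P := ∅)
    (p := fun r => decide (t < v r))
    (hsort.imp fun hle ht => decide_eq_true ((of_decide_eq_true ht).trans_le hle))
  rw [← setOf_comp_eq_cellUnion hl] at h
  simpa [hγ0] using h.symm

lemma capacity_setOf_lt_le_marginalSum (hγ0 : γ ∅ = 0)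
    (hconvex : SupermodularOn γ 𝒜.sets)
    (hπ : ∀ r, π ⁻¹' {r} ∈ 𝒜.sets) (hl : ∀ ω, π ω ∈ l) (hnd : l.Nodup) (v : ι → ℝ) (t : ℝ) :
    γ {ω | t < v (π ω)} ≤
      marginalSum γ (fun r => π ⁻¹' {r}) ∅ l fun r => if t < v r then 1 else 0 := by
  have h := sub_le_marginalSum_indicator hconvex 𝒜.empty_mem (fun r _ => hπ r)
    (hnd.imp fun hne => (disjoint_singleton.2 hne).preimage π) fun r => decide (t < v r)
  rw [← setOf_comp_eq_cellUnion hl] at h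
  simpa [hγ0] using h

lemma marginalSum_preimage_one (hγ0 : γ ∅ = 0) (hγ1 : γ univ = 1) (hl : ∀ ω, π ω ∈ l) :
    marginalSum γ (fun r => π ⁻¹' {r}) ∅ l 1 = 1 := by
  rw [marginalSum_one, cellUnion_preimage_singleton hl, empty_union, hγ1, hγ0, sub_zero]

theorem faInt_comp_eq_marginalSum (hγ0 : γ ∅ = 0) (hγ1 : γ univ = 1) (hl : ∀ ω, π ω ∈ l)
    {v : ι → ℝ} (hsort : l.Pairwise fun r r' => v r' ≤ v r) :
    faInt γ (fun ω => v (π ω)) = marginalSum γ (fun r => π ⁻¹' {r}) ∅ l v := by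
  have hone := marginalSum_preimage_one hγ0 hγ1 hl
  rw [faInt_eq_layerCake, ← (layerCake_marginalSum hone v).2]
  exact congrArg layerCake (funext (capacity_setOf_lt_eq_marginalSum hγ0 hl hsort))

theorem faInt_comp_le_marginalSum (hγ : IsCapacity 𝒜 γ)
    (hconvex : SupermodularOn γ 𝒜.sets)
    (hπ : ∀ r, π ⁻¹' {r} ∈ 𝒜.sets) (hl : ∀ ω, π ω ∈ l) (hnd : l.Nodup) (v : ι → ℝ) :
    faInt γ (fun ω => v (π ω)) ≤ marginalSum γ (fun r => π ⁻¹' {r}) ∅ l v := by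
  have hone := marginalSum_preimage_one hγ.empty hγ.univ hl
  rw [faInt_eq_layerCake, ← (layerCake_marginalSum hone v).2]
  exact layerCake_mono (hγ.layerIntegrable_setOf_lt (isBdd_comp hl v) (aMeasurable_comp hπ hl v))
    (layerCake_marginalSum hone v).1
    (capacity_setOf_lt_le_marginalSum hγ.empty hconvex hπ hl hnd v)

lemma faInt_comp_le_add (hγ : IsCapacity 𝒜 γ) (hπ : ∀ r, π ⁻¹' {r} ∈ 𝒜.sets)
    (hl : ∀ ω, π ω ∈ l) {v : ι → ℝ} (hsort : l.Pairwise fun r r' => v r' ≤ v r) {h : Ω → ℝ}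
    (hb : IsBdd h) (hm : AMeasurable 𝒜 h) {c : ℝ} (hle : ∀ ω, v (π ω) ≤ h ω + c) :
    faInt γ (fun ω => v (π ω)) ≤ faInt γ h + c := by
  have hshift : faInt γ (fun ω => v (π ω) - c) = faInt γ (fun ω => v (π ω)) - c := by
    rw [faInt_comp_eq_marginalSum hγ.empty hγ.univ hl (v := fun r => v r - c)
        (hsort.imp fun hle => sub_le_sub_right hle c),
      faInt_comp_eq_marginalSum hγ.empty hγ.univ hl hsort,
      show (fun r => v r - c) = v - c • 1 by ext; simp, map_sub, map_smul,
      marginalSum_preimage_one hγ.empty hγ.univ hl, smul_eq_mul, mul_one]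
  have := hγ.faInt_mono (isBdd_comp hl fun r => v r - c) hb
    (aMeasurable_comp hπ hl fun r => v r - c) hm fun ω => sub_le_iff_le_add.2 (hle ω)
  linarith

theorem sum_mul_faInt_comp_le {κ : Type*} [Fintype κ] (hγ : IsCapacity 𝒜 γ)
    (hconvex : SupermodularOn γ 𝒜.sets)
    (hπ : ∀ r, π ⁻¹' {r} ∈ 𝒜.sets) (hl : ∀ ω, π ω ∈ l) (hnd : l.Nodup)
    (hlπ : ∀ r ∈ l, ∃ ω, π ω = r) (v : κ → ι → ℝ) {a b : κ → ℝ} (hb : 0 ≤ b)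
    (hsort : ∀ k, a k ≠ 0 → l.Pairwise fun r r' => v k r' ≤ v k r) {c : ℝ}
    (hdom : ∀ ω, ∑ k, b k * v k (π ω) ≤ ∑ k, a k * v k (π ω) + c) :
    ∑ k, b k * faInt γ (fun ω => v k (π ω)) ≤ ∑ k, a k * faInt γ (fun ω => v k (π ω)) + c := by
  set M := marginalSum γ (fun r => π ⁻¹' {r}) ∅ l
  have hM1 : M 1 = 1 := marginalSum_preimage_one hγ.empty hγ.univ hl
  have hM k : a k * M (v k) = a k * faInt γ (fun ω => v k (π ω)) := by
    rcases eq_or_ne (a k) 0 with h | h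
    · simp [h]
    · rw [faInt_comp_eq_marginalSum hγ.empty hγ.univ hl (hsort k h)]
  calc ∑ k, b k * faInt γ (fun ω => v k (π ω))
      ≤ ∑ k, b k * M (v k) := Finset.sum_le_sum fun k _ =>
        mul_le_mul_of_nonneg_left (faInt_comp_le_marginalSum hγ hconvex hπ hl hnd (v k)) (hb k)
    _ = M (∑ k, b k • v k) := by simp [map_sum]
    _ ≤ M (∑ k, a k • v k + c • 1) := marginalSum_mono hγ.mono 𝒜.empty_mem (fun r _ => hπ r)
        fun r hr => by obtain ⟨ω, rfl⟩ := hlπ r hr; simpa using hdom ω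
    _ = ∑ k, a k * faInt γ (fun ω => v k (π ω)) + c := by
        simp [map_sum, hM1, ← hM]

end SimpleFunction

section Grid

noncomputable def gridCeil (ε x : ℝ) : ℝ := ε * ⌈x / ε⌉

variable {ε : ℝ}

lemma le_gridCeil (hε : 0 < ε) (x : ℝ) : x ≤ gridCeil ε x := by
  rw [gridCeil, ← div_le_iff₀' hε]
  exact Int.le_ceil _

lemma gridCeil_le_add (hε : 0 < ε) (x : ℝ) : gridCeil ε x ≤ x + ε := by
  have := mul_le_mul_of_nonneg_left (Int.ceil_lt_add_one (x / ε)).le hε.le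
  rwa [mul_add, mul_div_cancel₀ _ hε.ne', mul_one] at this

lemma gridCeil_mono (hε : 0 ≤ ε) : Monotone (gridCeil ε) := fun _ _ hxy =>
  mul_le_mul_of_nonneg_left (Int.cast_le.2 (Int.ceil_mono (div_le_div_of_nonneg_right hxy hε))) hε

lemma lt_gridCeil_iff (hε : 0 < ε) (t x : ℝ) : t < gridCeil ε x ↔ ε * ⌊t / ε⌋ < x := by
  rw [gridCeil, ← div_lt_iff₀' hε, ← Int.floor_lt, Int.lt_ceil, lt_div_iff₀' hε]

lemma gridCeil_lt_iff (hε : 0 < ε) (t x : ℝ) : gridCeil ε x < t ↔ x ≤ ε * (⌈t / ε⌉ - 1) := by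
  rw [gridCeil, ← lt_div_iff₀' hε, ← Int.lt_ceil, Int.lt_iff_add_one_le, ← le_sub_iff_add_le,
    Int.ceil_le, div_le_iff₀' hε]
  push_cast
  rfl

lemma AMeasurable.gridCeil {Ω : Type*} {𝒜 : SetAlgebra Ω} {h : Ω → ℝ} (hm : AMeasurable 𝒜 h)
    (hε : 0 < ε) : AMeasurable 𝒜 fun ω => gridCeil ε (h ω) := by
  intro t
  simp only [lt_gridCeil_iff hε, gridCeil_lt_iff hε, ← not_lt]
  exact ⟨(hm _).1, 𝒜.compl_mem _ (hm _).1⟩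

lemma finite_range_gridCeil {Ω : Type*} {h : Ω → ℝ} (hε : 0 < ε) (hb : IsBdd h) :
    (range fun ω => gridCeil ε (h ω)).Finite := by
  obtain ⟨c, hc⟩ := hb
  refine ((finite_Icc ⌈-c / ε⌉ ⌈c / ε⌉).image fun n : ℤ => ε * n).subset ?_
  rintro _ ⟨ω, rfl⟩
  obtain ⟨h₁, h₂⟩ := abs_le.1 (hc ω)
  exact ⟨⌈h ω / ε⌉, ⟨Int.ceil_mono (by gcongr), Int.ceil_mono (by gcongr)⟩, rfl⟩

lemma sum_mul_gridCeil_le_add {κ : Type*} [Fintype κ] (hε : 0 < ε) {a b x : κ → ℝ}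
    (ha : 0 ≤ a) (hb : 0 ≤ b) (hx : ∑ k, b k * x k ≤ ∑ k, a k * x k) :
    ∑ k, b k * gridCeil ε (x k) ≤ ∑ k, a k * gridCeil ε (x k) + ε * ∑ k, b k :=
  calc ∑ k, b k * gridCeil ε (x k)
      ≤ ∑ k, b k * (x k + ε) := Finset.sum_le_sum fun k _ =>
        mul_le_mul_of_nonneg_left (gridCeil_le_add hε _) (hb k)
    _ = ∑ k, b k * x k + ε * ∑ k, b k := by
        rw [mul_comm ε, Finset.sum_mul, ← Finset.sum_add_distrib]
        simp only [mul_add]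
    _ ≤ ∑ k, a k * gridCeil ε (x k) + ε * ∑ k, b k := add_le_add (hx.trans
        (Finset.sum_le_sum fun k _ => mul_le_mul_of_nonneg_left (le_gridCeil hε _) (ha k))) le_rfl

end Grid

lemma AMeasurable.setOf_eq_mem {Ω : Type*} {𝒜 : SetAlgebra Ω} {h : Ω → ℝ} (hm : AMeasurable 𝒜 h)
    (x : ℝ) : {ω | h ω = x} ∈ 𝒜.sets := by
  have : {ω | h ω = x} = ({ω | h ω < x} ∪ {ω | x < h ω})ᶜ := by
    ext ω; simp [le_antisymm_iff, and_comm]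
  rw [this]
  exact 𝒜.compl_mem _ (𝒜.union_mem _ (hm x).2 _ (hm x).1)

lemma preimage_singleton_mem_of_aMeasurable {Ω κ : Type*} [Finite κ] {𝒜 : SetAlgebra Ω}
    {s : κ → Ω → ℝ} (hs : ∀ k, AMeasurable 𝒜 (s k)) (r : κ → ℝ) :
    (fun ω k => s k ω) ⁻¹' {r} ∈ 𝒜.sets := by
  have : (fun ω k => s k ω) ⁻¹' {r} = ⋂ k, {ω | s k ω = r k} := by
    ext ω; simp [funext_iff]
  rw [this]
  exact 𝒜.iInter_mem fun k => (hs k).setOf_eq_mem (r k)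

lemma Finset.exists_list_pairwise_ge {α : Type*} (R : Finset α) (key : α → ℝ) :
    ∃ l : List α, l.Nodup ∧ (∀ x, x ∈ l ↔ x ∈ R) ∧ l.Pairwise fun x y => key y ≤ key x := by
  refine ⟨R.toList.mergeSort fun x y => decide (key y ≤ key x),
    (List.mergeSort_perm _ _).nodup_iff.2 R.nodup_toList, by simp, ?_⟩
  simpa using List.pairwise_mergeSort (le := fun x y => decide (key y ≤ key x))
    (fun a b c hab hbc => by simp only [decide_eq_true_eq] at *; linarith)
    (fun a b => by simpa using le_total (key b) (key a)) R.toList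

lemma Monovary.comp_monotone {ι α β : Type*} [LinearOrder α] [LinearOrder β] {f g : ι → α}
    (h : Monovary f g) {φ : α → β} {ψ : α → β} (hφ : Monotone φ) (hψ : Monotone ψ) :
    Monovary (φ ∘ f) (ψ ∘ g) :=
  ((h.comp_monotone_left hφ).symm.comp_monotone_left hψ).symm

lemma le_of_sum_mul_le_of_monovary {Ω κ : Type*} [Fintype κ] {s : κ → Ω → ℝ} {a : κ → ℝ}
    (ha : 0 ≤ a) (hs : ∀ j k, a j ≠ 0 → a k ≠ 0 → Monovary (s j) (s k)) {k : κ} (hk : a k ≠ 0)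
    {ω ω' : Ω} (h : ∑ j, a j * s j ω' ≤ ∑ j, a j * s j ω) : s k ω' ≤ s k ω := by
  by_contra! hlt
  refine h.not_gt (Finset.sum_lt_sum (fun j _ => ?_) ⟨k, Finset.mem_univ _, ?_⟩)
  · rcases eq_or_ne (a j) 0 with hj | hj
    · simp [hj]
    · exact mul_le_mul_of_nonneg_left (hs j k hj hk hlt) (ha j)
  · exact mul_lt_mul_of_pos_left hlt ((ha k).lt_of_ne' hk)

section Coherence

variable {Ω κ : Type*} [Fintype κ] {𝒜 : SetAlgebra Ω} {γ : Set Ω → ℝ}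

lemma sum_mul_faInt_le_add_s6 (hγ : IsCapacity 𝒜 γ)
    (hconvex : SupermodularOn γ 𝒜.sets)
    {h : κ → Ω → ℝ} (hbdd : ∀ k, IsBdd (h k)) (hm : ∀ k, AMeasurable 𝒜 (h k)) {a b : κ → ℝ}
    (ha : 0 ≤ a) (hb : 0 ≤ b) (hmv : ∀ j k, a j ≠ 0 → a k ≠ 0 → Monovary (h j) (h k))
    (hdom : ∀ ω, ∑ k, b k * h k ω ≤ ∑ k, a k * h k ω) {ε : ℝ} (hε : 0 < ε) :
    ∑ k, b k * faInt γ (h k) ≤ ∑ k, a k * faInt γ (h k) + ε * ∑ k, (a k + b k) := by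
  set π : Ω → κ → ℝ := fun ω k => gridCeil ε (h k ω)
  have hfin : (range π).Finite :=
    (Finite.pi fun k => finite_range_gridCeil hε (hbdd k)).subset
      (by rintro _ ⟨ω, rfl⟩ k _; exact ⟨ω, rfl⟩)
  obtain ⟨l, hnd, hmem, hsort⟩ := hfin.toFinset.exists_list_pairwise_ge fun r => ∑ k, a k * r k
  have hl ω : π ω ∈ l := (hmem _).2 (hfin.mem_toFinset.2 ⟨ω, rfl⟩)
  have hlπ r (hr : r ∈ l) : ∃ ω, π ω = r := hfin.mem_toFinset.1 ((hmem r).1 hr)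
  have hπ := preimage_singleton_mem_of_aMeasurable fun k => (hm k).gridCeil hε
  have hsortk k (hk : a k ≠ 0) : l.Pairwise fun r r' => r' k ≤ r k :=
    hsort.imp_of_mem fun hr hr' hle => by
      obtain ⟨ω, rfl⟩ := hlπ _ hr
      obtain ⟨ω', rfl⟩ := hlπ _ hr'
      exact le_of_sum_mul_le_of_monovary ha (fun i j hi hj => (hmv i j hi hj).comp_monotone
        (gridCeil_mono hε.le) (gridCeil_mono hε.le)) hk hle
  have hsimple := sum_mul_faInt_comp_le hγ hconvex hπ hl hnd hlπ (fun k r => r k) hb hsortk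
    fun ω => sum_mul_gridCeil_le_add hε ha hb (hdom ω)
  have hlow k : faInt γ (h k) ≤ faInt γ fun ω => π ω k :=
    hγ.faInt_mono (hbdd k) (isBdd_comp hl fun r => r k) (hm k)
      (aMeasurable_comp hπ hl fun r => r k) fun ω => le_gridCeil hε _
  have hup k : a k * faInt γ (fun ω => π ω k) ≤ a k * (faInt γ (h k) + ε) := by
    rcases eq_or_ne (a k) 0 with hk | hk
    · simp [hk]
    · exact mul_le_mul_of_nonneg_left (faInt_comp_le_add hγ hπ hl (hsortk k hk) (hbdd k) (hm k)
        fun ω => gridCeil_le_add hε _) (ha k)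
  calc ∑ k, b k * faInt γ (h k)
      ≤ ∑ k, b k * faInt γ (fun ω => π ω k) :=
        Finset.sum_le_sum fun k _ => mul_le_mul_of_nonneg_left (hlow k) (hb k)
    _ ≤ ∑ k, a k * faInt γ (fun ω => π ω k) + ε * ∑ k, b k := hsimple
    _ ≤ ∑ k, a k * (faInt γ (h k) + ε) + ε * ∑ k, b k :=
        add_le_add (Finset.sum_le_sum fun k _ => hup k) le_rfl
    _ = ∑ k, a k * faInt γ (h k) + ε * ∑ k, (a k + b k) := by
        rw [mul_comm ε, mul_comm ε, Finset.sum_mul, Finset.sum_mul]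
        simp only [mul_add, add_mul, Finset.sum_add_distrib]
        ring

theorem sum_mul_faInt_le_of_monovary (hγ : IsCapacity 𝒜 γ)
    (hconvex : SupermodularOn γ 𝒜.sets)
    {h : κ → Ω → ℝ} (hbdd : ∀ k, IsBdd (h k)) (hm : ∀ k, AMeasurable 𝒜 (h k)) {a b : κ → ℝ}
    (ha : 0 ≤ a) (hb : 0 ≤ b) (hmv : ∀ j k, a j ≠ 0 → a k ≠ 0 → Monovary (h j) (h k))
    (hdom : ∀ ω, ∑ k, b k * h k ω ≤ ∑ k, a k * h k ω) :
    ∑ k, b k * faInt γ (h k) ≤ ∑ k, a k * faInt γ (h k) := by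
  refine le_of_forall_pos_le_add fun δ hδ => ?_
  set C := ∑ k, (a k + b k)
  have hC : 0 ≤ C := Finset.sum_nonneg fun k _ => add_nonneg (ha k) (hb k)
  refine (sum_mul_faInt_le_add_s6 hγ hconvex hbdd hm ha hb hmv hdom
    (div_pos hδ (by linarith : 0 < C + 1))).trans ?_
  gcongr
  rw [div_mul_eq_mul_div, div_le_iff₀ (by linarith)]
  nlinarith

end Coherence

lemma Finsupp.sum_mul_eq_sum_subtype {α : Type*} (θ : α →₀ ℝ) {S : Finset α}
    (hS : θ.support ⊆ S) (g : α → ℝ) : θ.sum (fun f c => c * g f) = ∑ f : S, θ f * g f := by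
  rw [Finsupp.sum_of_support_subset θ hS (fun f c => c * g f) fun _ _ => zero_mul _]
  exact (Finset.sum_coe_sort S _).symm

/-- Choquet expected utility with respect to a convex (supermodular)
capacity is `Θ₁`-coherent: if the support of the gamble `θ` consists of pairwise
comonotonic acts and `θ` dominates `η` state by state in conditional utility, then the
value of `θ` is at least the value of `η`. -/
theorem ceu_implies_theta1_coherence {Ω X : Type*} (𝒜 : SetAlgebra Ω)
    (γ : Set Ω → ℝ) (hγ0 : γ ∅ = 0) (hγ1 : γ Set.univ = 1)
    (hmono : ∀ A ∈ 𝒜.sets, ∀ B ∈ 𝒜.sets, A ⊆ B → γ A ≤ γ B)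
    (hconvex : ∀ A ∈ 𝒜.sets, ∀ B ∈ 𝒜.sets, γ A + γ B ≤ γ (A ∪ B) + γ (A ∩ B))
    (F : Set (Ω → X)) (V : (Ω → X) → ℝ) (u : X → ℝ)
    (hbm : ∀ f ∈ F, IsBdd (fun ω => u (f ω)) ∧ AMeasurable 𝒜 (fun ω => u (f ω)))
    (hrep : ∀ f ∈ F, V f = faInt γ (fun ω => u (f ω))) :
    ∀ θ η : (Ω → X) →₀ ℝ, ↑θ.support ⊆ F → ↑η.support ⊆ F →
      (∀ f, 0 ≤ θ f) → (∀ f, 0 ≤ η f) →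
      θ.sum (fun _ v => v) ≤ 1 → η.sum (fun _ v => v) ≤ 1 →
      (∀ f ∈ θ.support, ∀ g ∈ θ.support, ∀ ω ω' : Ω,
        0 ≤ (u (f ω) - u (f ω')) * (u (g ω) - u (g ω'))) →
      (∀ ω : Ω, η.sum (fun f v => v * u (f ω)) ≤ θ.sum (fun f v => v * u (f ω))) →
      η.sum (fun f v => v * V f) ≤ θ.sum (fun f v => v * V f) := by
  intro θ η hθF hηF hθ0 hη0 _ _ hcom hdom
  classical
  set S := θ.support ∪ η.support
  have hθS : θ.support ⊆ S := Finset.subset_union_left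
  have hηS : η.support ⊆ S := Finset.subset_union_right
  have hSF (f : S) : f.1 ∈ F := (Finset.mem_union.1 f.2).elim (fun h => hθF h) (fun h => hηF h)
  have hV (ζ : (Ω → X) →₀ ℝ) (hζ : ζ.support ⊆ S) :
      ζ.sum (fun f v => v * V f) = ∑ f : S, ζ f * faInt γ (fun ω => u (f.1 ω)) := by
    rw [Finsupp.sum_mul_eq_sum_subtype ζ hζ]
    exact Finset.sum_congr rfl fun f _ => by rw [hrep f (hSF f)]
  rw [hV θ hθS, hV η hηS]
  refine sum_mul_faInt_le_of_monovary ⟨hγ0, hγ1, fun A hA B hB => hmono A hA B hB⟩ hconvex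
    (κ := S) (h := fun f ω => u (f.1 ω)) (fun f => (hbm f (hSF f)).1) (fun f => (hbm f (hSF f)).2)
    (fun f => hθ0 f) (fun f => hη0 f) (fun f g hf hg => monovary_iff_forall_smul_nonneg.2
      fun ω ω' => hcom f (Finsupp.mem_support_iff.2 hf) g (Finsupp.mem_support_iff.2 hg) ω' ω)
    fun ω => ?_
  simpa only [Finsupp.sum_mul_eq_sum_subtype _ hθS, Finsupp.sum_mul_eq_sum_subtype _ hηS]
    using hdom ω
end

section
/- Let $\gamma$ be a capacity on an algebra $\mathcal{A}$ and suppose that for all gambles $\theta, \eta$ supported on two-valued acts of the form $yAx$ ($A \in \mathcal{A}$), with the acts in the support of $\theta$ pairwise comonotonic, state-by-state dominance $u(\theta|\cdot) \ge u(\eta|\cdot)$ implies $V(\theta) \ge V(\eta)$, where $V(yAx) = \gamma(A)$, $u(y)=1$, $u(x)=0$. Then $\gamma$ is convex: $\gamma(A \cup B) + \gamma(A \cap B) \ge \gamma(A) + \gamma(B)$ for all $A, B \in \mathcal{A}$. -/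
open scoped Classical

private lemma sum_pair_aux {Ω X : Type*} (a b : Ω → X) (c d : ℝ) (F : (Ω → X) → ℝ) :
    (Finsupp.single a c + Finsupp.single b d).sum (fun f v => v * F f)
      = c * F a + d * F b := by
  rw [Finsupp.sum_add_index' (by intro f; ring) (by intro f v w; ring)]
  rw [Finsupp.sum_single_index (by ring), Finsupp.sum_single_index (by ring)]

private lemma comono_aux (p q r s : Prop) [Decidable p] [Decidable q] [Decidable r]
    [Decidable s] (h1 : p → r) (h2 : q → s) :
    0 ≤ (((if r then (1:ℝ) else 0) - if s then 1 else 0) *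
      ((if p then (1:ℝ) else 0) - if q then 1 else 0)) := by
  by_cases hp : p <;> by_cases hq : q <;> by_cases hr : r <;> by_cases hs : s <;>
    simp_all <;> norm_num

/-- If the coherence property holds for gambles supported on two-valued acts
`yAx` (`A ∈ 𝒜`), with the acts in the support of `θ` pairwise comonotonic, and
`V (yAx) = γ A`, `u y = 1`, `u x = 0`, then the capacity `γ` is convex. -/
theorem convex_of_comonotone_coherence {Ω X : Type*} (𝒜 : SetAlgebra Ω)
    (γ : Set Ω → ℝ) (hγ0 : γ ∅ = 0)
    (hmono : ∀ A ∈ 𝒜.sets, ∀ B ∈ 𝒜.sets, A ⊆ B → γ A ≤ γ B)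
    (V : (Ω → X) → ℝ) (u : X → ℝ) (x y : X) (hux : u x = 0) (huy : u y = 1)
    (hV : ∀ A ∈ 𝒜.sets, V (fun ω => if ω ∈ A then y else x) = γ A)
    (coh : ∀ θ η : (Ω → X) →₀ ℝ,
      (∀ g ∈ θ.support, ∃ A ∈ 𝒜.sets, g = fun ω => if ω ∈ A then y else x) →
      (∀ g ∈ η.support, ∃ A ∈ 𝒜.sets, g = fun ω => if ω ∈ A then y else x) →
      (∀ f, 0 ≤ θ f) → (∀ f, 0 ≤ η f) →
      θ.sum (fun _ v => v) ≤ 1 → η.sum (fun _ v => v) ≤ 1 →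
      (∀ f ∈ θ.support, ∀ g ∈ θ.support, ∀ ω ω' : Ω,
        0 ≤ (u (f ω) - u (f ω')) * (u (g ω) - u (g ω'))) →
      (∀ ω : Ω, η.sum (fun f v => v * u (f ω)) ≤ θ.sum (fun f v => v * u (f ω))) →
      η.sum (fun f v => v * V f) ≤ θ.sum (fun f v => v * V f)) :
    ∀ A ∈ 𝒜.sets, ∀ B ∈ 𝒜.sets, γ A + γ B ≤ γ (A ∪ B) + γ (A ∩ B) := by
  intro A hA B hB
  -- the two-valued act associated with a set
  set f : Set Ω → (Ω → X) := fun S ω => if ω ∈ S then y else x with hf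
  have hu : ∀ (S : Set Ω) ω, u (f S ω) = if ω ∈ S then 1 else 0 := by
    intro S ω; by_cases h : ω ∈ S <;> simp [hf, h, hux, huy]
  have hcap : A ∩ B ∈ 𝒜.sets := by
    have : (Aᶜ ∪ Bᶜ)ᶜ ∈ 𝒜.sets :=
      𝒜.compl_mem _ (𝒜.union_mem _ (𝒜.compl_mem _ hA) _ (𝒜.compl_mem _ hB))
    simpa [Set.compl_union] using this
  have hcup : A ∪ B ∈ 𝒜.sets := 𝒜.union_mem _ hA _ hB
  set θ : (Ω → X) →₀ ℝ :=
    Finsupp.single (f (A ∪ B)) (1/2) + Finsupp.single (f (A ∩ B)) (1/2) with hθ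
  set η : (Ω → X) →₀ ℝ :=
    Finsupp.single (f A) (1/2) + Finsupp.single (f B) (1/2) with hη
  have hθsupp : ∀ g ∈ θ.support, g = f (A ∪ B) ∨ g = f (A ∩ B) := by
    intro g hg
    have := Finsupp.support_add hg
    simp only [Finset.mem_union] at this
    rcases this with h | h
    · exact Or.inl (Finset.mem_singleton.1 (Finsupp.support_single_subset h))
    · exact Or.inr (Finset.mem_singleton.1 (Finsupp.support_single_subset h))
  have hηsupp : ∀ g ∈ η.support, g = f A ∨ g = f B := by
    intro g hg
    have := Finsupp.support_add hg
    simp only [Finset.mem_union] at this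
    rcases this with h | h
    · exact Or.inl (Finset.mem_singleton.1 (Finsupp.support_single_subset h))
    · exact Or.inr (Finset.mem_singleton.1 (Finsupp.support_single_subset h))
  have key := coh θ η
    (by
      intro g hg
      rcases hθsupp g hg with h | h
      · exact ⟨A ∪ B, hcup, h⟩
      · exact ⟨A ∩ B, hcap, h⟩)
    (by
      intro g hg
      rcases hηsupp g hg with h | h
      · exact ⟨A, hA, h⟩
      · exact ⟨B, hB, h⟩)
    (by
      intro g
      simp only [hθ, Finsupp.add_apply, Finsupp.single_apply]
      split_ifs <;> norm_num)
    (by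
      intro g
      simp only [hη, Finsupp.add_apply, Finsupp.single_apply]
      split_ifs <;> norm_num)
    (by
      have : θ.sum (fun _ v => v) = θ.sum (fun g v => v * 1) := by
        apply Finsupp.sum_congr; intro g _; ring
      rw [this, hθ, sum_pair_aux]; norm_num)
    (by
      have : η.sum (fun _ v => v) = η.sum (fun g v => v * 1) := by
        apply Finsupp.sum_congr; intro g _; ring
      rw [this, hη, sum_pair_aux]; norm_num)
    (by
      intro g₁ h₁ g₂ h₂ ω ω'
      rcases hθsupp g₁ h₁ with h | h <;> rcases hθsupp g₂ h₂ with h' | h' <;>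
        subst h <;> subst h' <;> simp only [hu] <;>
        (by_cases p1 : ω ∈ A <;> by_cases p2 : ω' ∈ A <;>
          by_cases p3 : ω ∈ B <;> by_cases p4 : ω' ∈ B <;>
          simp [p1, p2, p3, p4, Set.mem_union, Set.mem_inter_iff]))
    (by
      intro ω
      rw [hθ, hη, sum_pair_aux, sum_pair_aux, hu, hu, hu, hu]
      by_cases hA' : ω ∈ A <;> by_cases hB' : ω ∈ B <;>
        simp [hA', hB'] <;> norm_num)
  rw [hθ, hη, sum_pair_aux, sum_pair_aux] at key
  have hxy : x ≠ y := fun h => by rw [h, huy] at hux; norm_num at hux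
  have hfV : ∀ S ∈ 𝒜.sets, V (f S) = γ S := by
    intro S hS; exact hV S hS
  rw [hfV _ hcup, hfV _ hcap, hfV _ hA, hfV _ hB] at key
  linarith
end
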